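/- arXiv:1905.10551 — 5 statements merged into one kernel-verified Lean document; each statement's English description precedes it below -/
import Mathlib

section
/- Let p ≥ 1 be a real number and let φ be a C² complex-valued function on the open unit disk 𝔻. Define f(z) = φ(z)·|z|^{2(p−1)}. Then for every z ∈ 𝔻\{0} at which Dφ(z) ≠ 0, one has Df(z) = |z|^{2(p−1)}·Dφ(z) ≠ 0 and Re(D²f(z)/Df(z)) = Re(D²φ(z)/Dφ(z)). In particular, for each α ∈ [0,1), Re(D²f/Df) > α holds at every z ∈ 𝔻\{0} if and only if Re(D²φ/Dφ) > α holds at every z ∈ 𝔻\{0}. -/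
open Complex Metric Set

/-- Wirtinger derivative `f_z = (1/2)(∂f/∂x - i ∂f/∂y)`. -/
noncomputable def wz (f : ℂ → ℂ) (z : ℂ) : ℂ :=
  (1 / 2) * (fderiv ℝ f z 1 - Complex.I * fderiv ℝ f z Complex.I)

/-- Wirtinger derivative `f_z̄ = (1/2)(∂f/∂x + i ∂f/∂y)`. -/
noncomputable def wzbar (f : ℂ → ℂ) (z : ℂ) : ℂ :=
  (1 / 2) * (fderiv ℝ f z 1 + Complex.I * fderiv ℝ f z Complex.I)

/-- The operator `Df = z f_z - z̄ f_z̄`. -/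
noncomputable def Dop (f : ℂ → ℂ) (z : ℂ) : ℂ :=
  z * wz f z - (starRingEnd ℂ) z * wzbar f z

/-!
Writing `z = r e^{iθ}`, the operator `D = z ∂_z - z̄ ∂_z̄` is the angular derivative `-i ∂/∂θ`,
i.e. `Df(z) = -i · df_z(iz)`. It is therefore a derivation that kills every radial function.
Multiplying `φ` by the nonvanishing radial factor `|z|^{2(p-1)}` thus commutes with `D` and
with `D²` on the punctured disk, and the factor cancels in `D²f / Df`.
-/

theorem Dop_eq_neg_I_mul_fderiv (f : ℂ → ℂ) (z : ℂ) :
    Dop f z = -I * fderiv ℝ f z (I * z) := by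
  have hIz : I * z = (-z.im) • (1 : ℂ) + z.re • I := by
    apply Complex.ext <;> simp
  rw [Dop, wz, wzbar, hIz, map_add, map_smul, map_smul]
  generalize fderiv ℝ f z = L
  conv_lhs => rw [← Complex.re_add_im z]
  simp only [map_add, map_mul, conj_ofReal, conj_I, real_smul, ofReal_neg]
  ring

theorem Filter.EventuallyEq.Dop_eq {u v : ℂ → ℂ} {z : ℂ} (h : u =ᶠ[nhds z] v) :
    Dop u z = Dop v z := by
  rw [Dop_eq_neg_I_mul_fderiv, Dop_eq_neg_I_mul_fderiv, h.fderiv_eq]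

theorem Dop_mul {u v : ℂ → ℂ} {z : ℂ} (hu : DifferentiableAt ℝ u z)
    (hv : DifferentiableAt ℝ v z) :
    Dop (fun w => u w * v w) z = u z * Dop v z + v z * Dop u z := by
  simp only [Dop_eq_neg_I_mul_fderiv, fderiv_fun_mul hu hv, add_apply,
    smul_apply, smul_eq_mul]
  ring

theorem Dop_eq_zero_of_rotation_invariant {f : ℂ → ℂ} {z : ℂ} (hf : DifferentiableAt ℝ f z)
    (hrot : ∀ t : ℝ, f (exp (t * I) * z) = f z) : Dop f z = 0 := by
  have hcurve : HasDerivAt (fun t : ℝ => exp (t * I) * z) (I * z) 0 := by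
    have := ((hasDerivAt_id (0 : ℝ)).ofReal_comp.mul_const I).cexp.mul_const z
    simpa using this
  have hcomp := hf.hasFDerivAt.comp_hasDerivAt_of_eq (0 : ℝ) hcurve (by simp)
  simp only [Function.comp_def, hrot] at hcomp
  rw [Dop_eq_neg_I_mul_fderiv, hcomp.unique (hasDerivAt_const 0 (f z)), mul_zero]

theorem differentiableAt_ofReal_norm_rpow (s : ℝ) {z : ℂ} (hz : z ≠ 0) :
    DifferentiableAt ℝ (fun w : ℂ => ((‖w‖ ^ s : ℝ) : ℂ)) z :=
  ofRealCLM.differentiableAt.comp z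
    ((differentiableAt_id.norm ℂ hz).rpow_const (Or.inl (norm_ne_zero_iff.2 hz)))

theorem Dop_ofReal_norm_rpow (s : ℝ) {z : ℂ} (hz : z ≠ 0) :
    Dop (fun w : ℂ => ((‖w‖ ^ s : ℝ) : ℂ)) z = 0 :=
  Dop_eq_zero_of_rotation_invariant (differentiableAt_ofReal_norm_rpow s hz) fun t => by
    simp only [norm_mul, norm_exp_ofReal_mul_I, one_mul]

theorem differentiableAt_Dop {f : ℂ → ℂ} {z : ℂ} (hf : ContDiffAt ℝ 2 f z) :
    DifferentiableAt ℝ (Dop f) z := by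
  simp_rw [funext (Dop_eq_neg_I_mul_fderiv f)]
  exact (differentiableAt_const _).mul
    (((hf.fderiv_right (by norm_num)).differentiableAt one_ne_zero).clm_apply
      ((differentiableAt_const _).mul differentiableAt_id))

section RotationInvariantFactor

variable {u g : ℂ → ℂ} {z : ℂ}

theorem Dop_mul_of_Dop_eq_zero (hu : DifferentiableAt ℝ u z) (hg : DifferentiableAt ℝ g z)
    (hDg : Dop g z = 0) : Dop (fun w => u w * g w) z = g z * Dop u z := by
  rw [Dop_mul hu hg, hDg, mul_zero, zero_add]

theorem Dop_Dop_mul_of_Dop_eq_zero {U : Set ℂ} (hU : IsOpen U) (hz : z ∈ U)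
    (hu : ∀ w ∈ U, DifferentiableAt ℝ u w) (hg : ∀ w ∈ U, DifferentiableAt ℝ g w)
    (hDg : ∀ w ∈ U, Dop g w = 0) (hDu : DifferentiableAt ℝ (Dop u) z) :
    Dop (Dop (fun w => u w * g w)) z = g z * Dop (Dop u) z := by
  have hD : Dop (fun w => u w * g w) =ᶠ[nhds z] fun w => g w * Dop u w :=
    Filter.eventually_of_mem (hU.mem_nhds hz) fun w hw =>
      Dop_mul_of_Dop_eq_zero (hu w hw) (hg w hw) (hDg w hw)
  rw [hD.Dop_eq, Dop_mul (hg z hz) hDu, hDg z hz, mul_zero, add_zero]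

end RotationInvariantFactor

theorem stmt_2_general (p : ℝ) (φ f : ℂ → ℂ)
    (hφ : ContDiffOn ℝ 2 φ (ball (0 : ℂ) 1))
    (hf : ∀ z, f z = φ z * ((‖z‖ ^ (2 * (p - 1)) : ℝ) : ℂ)) :
    (∀ z ∈ ball (0 : ℂ) 1 \ {0}, Dop φ z ≠ 0 →
        Dop f z = ((‖z‖ ^ (2 * (p - 1)) : ℝ) : ℂ) * Dop φ z ∧
          Dop f z ≠ 0 ∧
          (Dop (Dop f) z / Dop f z).re = (Dop (Dop φ) z / Dop φ z).re) ∧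
      ∀ α : ℝ, 0 ≤ α → α < 1 →
        ((∀ z ∈ ball (0 : ℂ) 1 \ {0}, α < (Dop (Dop f) z / Dop f z).re) ↔
          (∀ z ∈ ball (0 : ℂ) 1 \ {0}, α < (Dop (Dop φ) z / Dop φ z).re)) := by
  set U := ball (0 : ℂ) 1 \ {0}
  set g : ℂ → ℂ := fun w => ((‖w‖ ^ (2 * (p - 1)) : ℝ) : ℂ)
  obtain rfl : f = fun w => φ w * g w := funext hf
  have hU : IsOpen U := isOpen_ball.sdiff isClosed_singleton
  have hφ2 : ∀ w ∈ U, ContDiffAt ℝ 2 φ w := fun w hw => hφ.contDiffAt (isOpen_ball.mem_nhds hw.1)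
  have hφ1 : ∀ w ∈ U, DifferentiableAt ℝ φ w := fun w hw =>
    (hφ2 w hw).differentiableAt (by norm_num)
  have hg : ∀ w ∈ U, DifferentiableAt ℝ g w := fun w hw =>
    differentiableAt_ofReal_norm_rpow _ hw.2
  have hDg : ∀ w ∈ U, Dop g w = 0 := fun w hw => Dop_ofReal_norm_rpow _ hw.2
  have hg0 : ∀ w ∈ U, g w ≠ 0 := fun w hw =>
    ofReal_ne_zero.2 (Real.rpow_pos_of_pos (norm_pos_iff.2 hw.2) _).ne'
  have hD1 : ∀ z ∈ U, Dop (fun w => φ w * g w) z = g z * Dop φ z := fun z hz =>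
    Dop_mul_of_Dop_eq_zero (hφ1 z hz) (hg z hz) (hDg z hz)
  have hratio : ∀ z ∈ U, Dop (Dop (fun w => φ w * g w)) z / Dop (fun w => φ w * g w) z =
      Dop (Dop φ) z / Dop φ z := fun z hz => by
    rw [hD1 z hz, Dop_Dop_mul_of_Dop_eq_zero hU hz hφ1 hg hDg (differentiableAt_Dop (hφ2 z hz)),
      mul_div_mul_left _ _ (hg0 z hz)]
  refine ⟨fun z hz hne => ⟨hD1 z hz, ?_, by rw [hratio z hz]⟩, fun α _ _ => ?_⟩
  · rw [hD1 z hz]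
    exact mul_ne_zero (hg0 z hz) hne
  · exact forall₂_congr fun z hz => by rw [hratio z hz]

theorem stmt_2 (p : ℝ) (hp : 1 ≤ p) (φ f : ℂ → ℂ)
    (hφ : ContDiffOn ℝ 2 φ (ball (0 : ℂ) 1))
    (hf : ∀ z, f z = φ z * ((‖z‖ ^ (2 * (p - 1)) : ℝ) : ℂ)) :
    (∀ z ∈ ball (0 : ℂ) 1 \ {0}, Dop φ z ≠ 0 →
        Dop f z = ((‖z‖ ^ (2 * (p - 1)) : ℝ) : ℂ) * Dop φ z ∧
          Dop f z ≠ 0 ∧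
          (Dop (Dop f) z / Dop f z).re = (Dop (Dop φ) z / Dop φ z).re) ∧
      ∀ α : ℝ, 0 ≤ α → α < 1 →
        ((∀ z ∈ ball (0 : ℂ) 1 \ {0}, α < (Dop (Dop f) z / Dop f z).re) ↔
          (∀ z ∈ ball (0 : ℂ) 1 \ {0}, α < (Dop (Dop φ) z / Dop φ z).re)) :=
  stmt_2_general p φ f hφ hf
end

section
/- Let α ∈ [0,1), and let (aₙ)ₙ≥1 and (bₙ)ₙ≥1 be complex sequences satisfying Σₙ₌₁^∞ n·|aₙ − bₙ| ≤ 1 − α, such that the power series H(z) = Σₙ₌₁^∞ aₙ zⁿ and G(z) = Σₙ₌₁^∞ bₙ zⁿ converge for all z in the open unit disk 𝔻. Set h = exp(H) and g = exp(G). Then Re(1 + z·h′(z)/h(z) − z·g′(z)/g(z)) > α for all z ∈ 𝔻; that is, the log-harmonic mapping f(z) = z·h(z)·conj(g(z)) satisfies Re((z·f_z(z) − z̄·f_z̄(z))/f(z)) > α for all z ∈ 𝔻. -/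
/-!
Writing `h = exp H` and `g = exp G`, the quantity `z h'/h - z g'/g` is `z (H - G)'(z)
= ∑ n (aₙ - bₙ) zⁿ`, of modulus at most `|z| ∑ n |aₙ - bₙ| ≤ |z| (1 - α) < 1 - α`, so
`1 + z h'/h - z g'/g` has real part larger than `α`. For `f = z h conj g` the Wirtinger
derivatives give `(z f_z - z̄ f_z̄)/f = 1 + z h'/h - conj (z g'/g)`, which has the same real part.
-/

open Complex Metric Set

open ComplexConjugate Topology NNReal

section PowerSeries

variable {c : ℕ → ℂ} {F : ℂ → ℂ}

theorem differentiableOn_of_hasSum_pow {R : ℝ}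
    (hF : ∀ z ∈ ball (0 : ℂ) R, HasSum (fun n => c n * z ^ n) (F z)) :
    DifferentiableOn ℂ F (ball 0 R) := by
  set p := FormalMultilinearSeries.ofScalars ℂ c
  intro z hz
  obtain ⟨r, hzr, hrR⟩ := exists_between (mem_ball_zero_iff.mp hz)
  lift r to ℝ≥0 using (norm_nonneg z).trans hzr.le
  have hrad : (r : ENNReal) ≤ p.radius := by
    refine p.le_radius_of_tendsto (l := 0) ?_
    have hr : ((r : ℝ) : ℂ) ∈ ball (0 : ℂ) R := by simpa using hrR
    simpa [p, FormalMultilinearSeries.ofScalars_norm, NNReal.abs_eq] using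
      (hF r hr).summable.tendsto_atTop_zero.norm
  have hzrad : z ∈ eball 0 p.radius :=
    mem_eball_zero_iff.mpr (lt_of_lt_of_le (mod_cast hzr) hrad)
  have hsum : F =ᶠ[𝓝 z] p.sum := by
    filter_upwards [isOpen_ball.mem_nhds hz] with w hw
    simp only [FormalMultilinearSeries.sum, p, FormalMultilinearSeries.ofScalars_apply_eq,
      smul_eq_mul]
    exact (hF w hw).tsum_eq.symm
  have hp := p.hasFPowerSeriesOnBall (pos_of_gt hzrad)
  exact ((hp.analyticAt_of_mem hzrad).differentiableAt.congr_of_eventuallyEq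
    hsum).differentiableWithinAt

theorem differentiableOn_of_hasSum_pow_succ {R : ℝ}
    (hF : ∀ z ∈ ball (0 : ℂ) R, HasSum (fun n => c (n + 1) * z ^ (n + 1)) (F z)) :
    DifferentiableOn ℂ F (ball 0 R) := by
  have := differentiableOn_of_hasSum_pow (c := c) (F := fun z => c 0 + F z) fun z hz => by
    simpa using HasSum.zero_add (f := fun n => c n * z ^ n) (hF z hz)
  exact (differentiableOn_const_add_iff _).mp this

theorem norm_succ_mul_mul_pow_le (n : ℕ) (a : ℂ) {w : ℂ} (hw : ‖w‖ ≤ 1) :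
    ‖(n + 1) * a * w ^ n‖ ≤ (n + 1 : ℝ) * ‖a‖ := by
  rw [norm_mul, norm_mul, norm_pow, ← Nat.cast_succ, Complex.norm_natCast, Nat.cast_succ]
  exact mul_le_of_le_one_right (by positivity) (pow_le_one₀ (norm_nonneg w) hw)

theorem hasDerivAt_of_hasSum_pow_succ
    (hF : ∀ z ∈ ball (0 : ℂ) 1, HasSum (fun n => c (n + 1) * z ^ (n + 1)) (F z))
    (hc : Summable fun n : ℕ => (n + 1 : ℝ) * ‖c (n + 1)‖) {z : ℂ} (hz : z ∈ ball (0 : ℂ) 1) :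
    HasDerivAt F (∑' n : ℕ, (n + 1) * c (n + 1) * z ^ n) z := by
  have hD := hasDerivAt_tsum_of_isPreconnected hc isOpen_ball
    (convex_ball (0 : ℂ) 1).isPreconnected
    (g := fun n w => c (n + 1) * w ^ (n + 1)) (g' := fun n w => (n + 1) * c (n + 1) * w ^ n)
    (fun n w _ => by
      refine ((hasDerivAt_pow (n + 1) w).const_mul (c (n + 1))).congr_deriv ?_
      push_cast
      ring)
    (fun n w hw => norm_succ_mul_mul_pow_le n _ (mem_ball_zero_iff.mp hw).le)
    hz (hF z hz).summable hz
  refine hD.congr_of_eventuallyEq ?_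
  filter_upwards [isOpen_ball.mem_nhds hz] with w hw
  exact (hF w hw).tsum_eq.symm

theorem norm_tsum_succ_mul_pow_le (hc : Summable fun n : ℕ => (n + 1 : ℝ) * ‖c (n + 1)‖)
    {z : ℂ} (hz : ‖z‖ ≤ 1) :
    ‖∑' n : ℕ, (n + 1) * c (n + 1) * z ^ n‖ ≤ ∑' n : ℕ, (n + 1 : ℝ) * ‖c (n + 1)‖ :=
  tsum_of_norm_bounded hc.hasSum fun n => norm_succ_mul_mul_pow_le n _ hz

theorem norm_mul_deriv_sub_le {a b : ℕ → ℂ} {H G : ℂ → ℂ}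
    (hH : ∀ z ∈ ball (0 : ℂ) 1, HasSum (fun n => a (n + 1) * z ^ (n + 1)) (H z))
    (hG : ∀ z ∈ ball (0 : ℂ) 1, HasSum (fun n => b (n + 1) * z ^ (n + 1)) (G z))
    (hs : Summable fun n : ℕ => (n + 1 : ℝ) * ‖a (n + 1) - b (n + 1)‖)
    {z : ℂ} (hz : z ∈ ball (0 : ℂ) 1) :
    ‖z * (deriv H z - deriv G z)‖ ≤ ‖z‖ * ∑' n : ℕ, (n + 1 : ℝ) * ‖a (n + 1) - b (n + 1)‖ := by
  have hHG : ∀ w ∈ ball (0 : ℂ) 1,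
      HasSum (fun n => (a (n + 1) - b (n + 1)) * w ^ (n + 1)) (H w - G w) := fun w hw => by
    simpa only [sub_mul] using (hH w hw).sub (hG w hw)
  have hzn : ball (0 : ℂ) 1 ∈ 𝓝 z := isOpen_ball.mem_nhds hz
  rw [← deriv_fun_sub ((differentiableOn_of_hasSum_pow_succ hH).differentiableAt hzn)
    ((differentiableOn_of_hasSum_pow_succ hG).differentiableAt hzn),
    (hasDerivAt_of_hasSum_pow_succ (c := fun n => a n - b n) hHG hs hz).deriv, norm_mul]
  exact mul_le_mul_of_nonneg_left
    (norm_tsum_succ_mul_pow_le (c := fun n => a n - b n) hs (mem_ball_zero_iff.mp hz).le)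
    (norm_nonneg z)

end PowerSeries

theorem logDeriv_cexp_comp {F : ℂ → ℂ} {z : ℂ} (hF : DifferentiableAt ℂ F z) :
    logDeriv (fun w => exp (F w)) z = deriv F z := by
  rw [show (fun w => exp (F w)) = exp ∘ F from rfl, logDeriv_comp differentiableAt_exp hF,
    Complex.logDeriv_exp, Pi.one_apply, one_mul]

section Wirtinger

variable {P g : ℂ → ℂ} {P' g' z : ℂ}

theorem fderiv_real_mul_conj_apply (hP : HasDerivAt P P' z) (hg : HasDerivAt g g' z) (v : ℂ) :
    fderiv ℝ (fun w => P w * conj (g w)) z v = v * P' * conj (g z) + P z * conj (v * g') := by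
  have hconj : HasFDerivAt (fun w => conj (g w)) _ z := (hg.hasFDerivAt.restrictScalars ℝ).star
  rw [fderiv_fun_mul (hP.differentiableAt.restrictScalars ℝ) hconj.differentiableAt,
    hconj.fderiv, (hP.hasFDerivAt.restrictScalars ℝ).fderiv]
  simp only [add_apply, smul_apply,
    ContinuousLinearMap.comp_apply, ContinuousLinearMap.coe_restrictScalars',
    ContinuousLinearMap.toSpanSingleton_apply, smul_eq_mul, ContinuousLinearEquiv.coe_coe,
    starL'_apply, star_mul', RCLike.star_def, map_mul]
  ring

theorem wz_mul_conj (hP : HasDerivAt P P' z) (hg : HasDerivAt g g' z) :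
    wz (fun w => P w * conj (g w)) z = P' * conj (g z) := by
  simp only [wz, fderiv_real_mul_conj_apply hP hg, map_mul, conj_I, map_one]
  ring_nf
  rw [I_sq]
  ring

theorem wzbar_mul_conj (hP : HasDerivAt P P' z) (hg : HasDerivAt g g' z) :
    wzbar (fun w => P w * conj (g w)) z = P z * conj g' := by
  simp only [wzbar, fderiv_real_mul_conj_apply hP hg, map_mul, conj_I, map_one]
  ring_nf
  rw [I_sq]
  ring

theorem mul_wz_sub_conj_mul_wzbar_div (hP : HasDerivAt P P' z) (hg : HasDerivAt g g' z)
    (hz : z ≠ 0) (hP0 : P z ≠ 0) (hg0 : g z ≠ 0) :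
    (z * wz (fun w => w * P w * conj (g w)) z - conj z * wzbar (fun w => w * P w * conj (g w)) z)
        / (z * P z * conj (g z)) = 1 + z * P' / P z - conj (z * g' / g z) := by
  have hzP : HasDerivAt (fun w => w * P w) (1 * P z + z * P') z := (hasDerivAt_id' z).mul hP
  rw [wz_mul_conj hzP hg, wzbar_mul_conj hzP hg]
  have hg0' : conj (g z) ≠ 0 := (map_ne_zero _).mpr hg0
  simp only [map_div₀, map_mul]
  field_simp

end Wirtinger

theorem stmt_5_general (α : ℝ) (hα1 : α < 1)
    (a b : ℕ → ℂ) (H G h g f : ℂ → ℂ)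
    (hH : ∀ z ∈ ball (0 : ℂ) 1, HasSum (fun n : ℕ => a (n + 1) * z ^ (n + 1)) (H z))
    (hG : ∀ z ∈ ball (0 : ℂ) 1, HasSum (fun n : ℕ => b (n + 1) * z ^ (n + 1)) (G z))
    (hh : ∀ z, h z = Complex.exp (H z))
    (hg : ∀ z, g z = Complex.exp (G z))
    (hsummable : Summable fun n : ℕ => (n + 1 : ℝ) * ‖a (n + 1) - b (n + 1)‖)
    (hsum : (∑' n : ℕ, (n + 1 : ℝ) * ‖a (n + 1) - b (n + 1)‖) ≤ 1 - α)
    (hf : ∀ z, f z = z * h z * (starRingEnd ℂ) (g z)) :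
    (∀ z ∈ ball (0 : ℂ) 1,
        α < (1 + z * deriv h z / h z - z * deriv g z / g z).re) ∧
      ∀ z ∈ ball (0 : ℂ) 1 \ {0},
        α < ((z * wz f z - (starRingEnd ℂ) z * wzbar f z) / f z).re := by
  have hHd := differentiableOn_of_hasSum_pow_succ hH
  have hGd := differentiableOn_of_hasSum_pow_succ hG
  have hh' : h = fun w => exp (H w) := funext hh
  have hg' : g = fun w => exp (G w) := funext hg
  have hre : ∀ z ∈ ball (0 : ℂ) 1, α < (1 + z * deriv h z / h z - z * deriv g z / g z).re := by
    intro z hz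
    have hzn := isOpen_ball.mem_nhds hz
    rw [mul_div_assoc, mul_div_assoc, ← logDeriv_apply, ← logDeriv_apply, hh', hg',
      logDeriv_cexp_comp (hHd.differentiableAt hzn), logDeriv_cexp_comp (hGd.differentiableAt hzn),
      add_sub_assoc, ← mul_sub]
    have hw : ‖z * (deriv H z - deriv G z)‖ < 1 - α := calc
      _ ≤ ‖z‖ * ∑' n : ℕ, (n + 1 : ℝ) * ‖a (n + 1) - b (n + 1)‖ :=
        norm_mul_deriv_sub_le hH hG hsummable hz
      _ ≤ ‖z‖ * (1 - α) := mul_le_mul_of_nonneg_left hsum (norm_nonneg z)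
      _ < 1 - α := mul_lt_of_lt_one_left (sub_pos.2 hα1) (mem_ball_zero_iff.mp hz)
    rw [add_re, one_re]
    linarith [neg_abs_le (z * (deriv H z - deriv G z)).re,
      abs_re_le_norm (z * (deriv H z - deriv G z))]
  refine ⟨hre, fun z hz => ?_⟩
  have hzn := isOpen_ball.mem_nhds hz.1
  have hhd : DifferentiableAt ℂ h z := hh' ▸ (hHd.differentiableAt hzn).cexp
  have hgd : DifferentiableAt ℂ g z := hg' ▸ (hGd.differentiableAt hzn).cexp
  rw [show f = fun w => w * h w * conj (g w) from funext hf,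
    mul_wz_sub_conj_mul_wzbar_div hhd.hasDerivAt hgd.hasDerivAt hz.2
      (hh z ▸ exp_ne_zero _) (hg z ▸ exp_ne_zero _)]
  simpa only [sub_re, conj_re] using hre z hz.1

theorem stmt_5 (α : ℝ) (hα0 : 0 ≤ α) (hα1 : α < 1)
    (a b : ℕ → ℂ) (H G h g f : ℂ → ℂ)
    (hH : ∀ z ∈ ball (0 : ℂ) 1, HasSum (fun n : ℕ => a (n + 1) * z ^ (n + 1)) (H z))
    (hG : ∀ z ∈ ball (0 : ℂ) 1, HasSum (fun n : ℕ => b (n + 1) * z ^ (n + 1)) (G z))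
    (hh : ∀ z, h z = Complex.exp (H z))
    (hg : ∀ z, g z = Complex.exp (G z))
    (hsummable : Summable fun n : ℕ => (n + 1 : ℝ) * ‖a (n + 1) - b (n + 1)‖)
    (hsum : (∑' n : ℕ, (n + 1 : ℝ) * ‖a (n + 1) - b (n + 1)‖) ≤ 1 - α)
    (hf : ∀ z, f z = z * h z * (starRingEnd ℂ) (g z)) :
    (∀ z ∈ ball (0 : ℂ) 1,
        α < (1 + z * deriv h z / h z - z * deriv g z / g z).re) ∧
      ∀ z ∈ ball (0 : ℂ) 1 \ {0},
        α < ((z * wz f z - (starRingEnd ℂ) z * wzbar f z) / f z).re :=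
  stmt_5_general α hα1 a b H G h g f hH hG hh hg hsummable hsum hf
end

section
/- Let μ be analytic on the open unit disk 𝔻 with μ(0) = 0 and |μ(z)| < 1 for all z ∈ 𝔻. Let g be analytic and nonvanishing on 𝔻 with g(0) = 1, satisfying z·g′(z)·(1 − μ(z))·(1 − z) = μ(z)·g(z) for all z ∈ 𝔻, and define h(z) = g(z)/(1 − z). Then for all z ∈ 𝔻, |z|·|h(z)|·|g′(z)| ≤ (|z|/(1 − |z|)³)·exp(2|z|/(1 − |z|)). (The left-hand side equals |f_z̄(z)| for the log-harmonic mapping f(z) = z·h(z)·conj(g(z)), since f_z̄ = z·h·conj(g′).) -/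
open Complex Metric Set Filter Topology

/-!
By the Schwarz lemma `‖μ w‖ ≤ ‖w‖`, so the differential equation forces
`‖g' w‖ (1 - ‖w‖)² ≤ ‖g w‖` (at `w = 0` by continuity). Along the radius, in the
parameter `s` with `‖w‖ = s / (1 + s)`, this becomes `‖G'‖ ≤ ‖G‖`, and Grönwall gives
`‖g z‖ ≤ exp (‖z‖ / (1 - ‖z‖))`. Together with `‖h z‖ ≤ ‖g z‖ / (1 - ‖z‖)` this is the bound.
-/

theorem norm_mul_one_sub_norm_sq_le_of_eq {w m a b : ℂ} (hw : ‖w‖ < 1) (hw0 : w ≠ 0)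
    (hm : ‖m‖ ≤ ‖w‖) (h : w * a * (1 - m) * (1 - w) = m * b) :
    ‖a‖ * (1 - ‖w‖) ^ 2 ≤ ‖b‖ := by
  have h1w : 1 - ‖w‖ ≤ ‖1 - w‖ := by simpa using norm_sub_norm_le (1 : ℂ) w
  have h1m : 1 - ‖w‖ ≤ ‖1 - m‖ := by
    linarith [show 1 - ‖m‖ ≤ ‖1 - m‖ by simpa using norm_sub_norm_le (1 : ℂ) m]
  have hnorm : ‖w‖ * (‖a‖ * (‖1 - m‖ * ‖1 - w‖)) = ‖m‖ * ‖b‖ := by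
    simpa [norm_mul, mul_assoc] using congrArg norm h
  have hprod : (1 - ‖w‖) ^ 2 ≤ ‖1 - m‖ * ‖1 - w‖ := by
    rw [sq]; exact mul_le_mul h1m h1w (by linarith) (norm_nonneg _)
  have hab : ‖a‖ * (‖1 - m‖ * ‖1 - w‖) ≤ ‖b‖ := by
    refine le_of_mul_le_mul_left ?_ (norm_pos_iff.2 hw0)
    rw [hnorm]
    exact mul_le_mul_of_nonneg_right hm (norm_nonneg _)
  exact (mul_le_mul_of_nonneg_left hprod (norm_nonneg _)).trans hab

theorem norm_deriv_mul_sq_le_of_ode {μ g : ℂ → ℂ} (hgd : DifferentiableOn ℂ g (ball 0 1))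
    (hμ : ∀ w ∈ ball (0 : ℂ) 1, ‖μ w‖ ≤ ‖w‖)
    (heq : ∀ w ∈ ball (0 : ℂ) 1, w * deriv g w * (1 - μ w) * (1 - w) = μ w * g w) :
    ∀ w ∈ ball (0 : ℂ) 1, ‖deriv g w‖ * (1 - ‖w‖) ^ 2 ≤ ‖g w‖ := by
  have punctured : ∀ w ∈ ball (0 : ℂ) 1, w ≠ 0 → ‖deriv g w‖ * (1 - ‖w‖) ^ 2 ≤ ‖g w‖ :=
    fun w hw hw0 =>
      norm_mul_one_sub_norm_sq_le_of_eq (mem_ball_zero_iff.1 hw) hw0 (hμ w hw) (heq w hw)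
  intro w hw
  rcases ne_or_eq w 0 with hw0 | rfl
  · exact punctured w hw hw0
  · have hnhds : ball (0 : ℂ) 1 ∈ 𝓝 0 := isOpen_ball.mem_nhds hw
    have hcont : ContinuousAt (fun w => ‖deriv g w‖ * (1 - ‖w‖) ^ 2) 0 :=
      ((hgd.deriv isOpen_ball).continuousOn.continuousAt hnhds).norm.mul (by fun_prop)
    refine le_of_tendsto_of_tendsto (b := 𝓝[≠] (0 : ℂ))
      (hcont.tendsto.mono_left nhdsWithin_le_nhds)
      ((hgd.continuousOn.continuousAt hnhds).norm.tendsto.mono_left nhdsWithin_le_nhds) ?_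
    filter_upwards [inter_mem_nhdsWithin _ hnhds] with w hw
    exact punctured w hw.2 hw.1

theorem norm_radial_le_mul_exp {g : ℂ → ℂ} (hgd : DifferentiableOn ℂ g (ball 0 1))
    (hg' : ∀ w ∈ ball (0 : ℂ) 1, ‖deriv g w‖ * (1 - ‖w‖) ^ 2 ≤ ‖g w‖)
    {u : ℂ} (hu : ‖u‖ ≤ 1) {S : ℝ} (hS : 0 ≤ S) :
    ‖g ((S / (1 + S) : ℝ) * u)‖ ≤ ‖g 0‖ * Real.exp S := by
  -- `ρ = s / (1 + s)` solves `ρ' = (1 - ρ)²`, which turns the bound on `g'` into `‖G'‖ ≤ ‖G‖`.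
  set γ : ℝ → ℂ := fun s => (s / (1 + s) : ℝ) * u
  have hγ_norm : ∀ s, 0 ≤ s → ‖γ s‖ ≤ s / (1 + s) := fun s hs => by
    simp only [γ, norm_mul, Complex.norm_real, Real.norm_eq_abs,
      abs_of_nonneg (by positivity : 0 ≤ s / (1 + s))]
    exact mul_le_of_le_one_right (by positivity) hu
  have hγ_mem : ∀ s, 0 ≤ s → γ s ∈ ball (0 : ℂ) 1 := fun s hs => by
    rw [mem_ball_zero_iff]
    refine (hγ_norm s hs).trans_lt ?_
    rw [div_lt_one (by positivity)]; linarith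
  have hderiv : ∀ s, 0 ≤ s →
      HasDerivAt (g ∘ γ) (deriv g (γ s) * (((1 + s) ^ 2)⁻¹ : ℝ) * u) s := by
    intro s hs
    have hρ : HasDerivAt (fun s : ℝ => s / (1 + s)) ((1 + s) ^ 2)⁻¹ s := by
      refine ((hasDerivAt_id' s).div ((hasDerivAt_id' s).const_add 1)
        (by positivity)).congr_deriv ?_
      ring
    rw [mul_assoc]
    exact ((hgd.differentiableAt (isOpen_ball.mem_nhds (hγ_mem s hs))).hasDerivAt).comp s
      (hρ.ofReal_comp.mul_const u)
  have hbound : ∀ s, 0 ≤ s → ‖deriv g (γ s) * (((1 + s) ^ 2)⁻¹ : ℝ) * u‖ ≤ ‖g (γ s)‖ := by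
    intro s hs
    have h1γ : (1 + s)⁻¹ ≤ 1 - ‖γ s‖ := by
      have := hγ_norm s hs
      have : s / (1 + s) = 1 - (1 + s)⁻¹ := by field_simp; ring
      linarith
    calc ‖deriv g (γ s) * (((1 + s) ^ 2)⁻¹ : ℝ) * u‖
        ≤ ‖deriv g (γ s)‖ * (1 - ‖γ s‖) ^ 2 := by
          rw [norm_mul, norm_mul, Complex.norm_real, Real.norm_eq_abs, abs_of_pos (by positivity),
            ← inv_pow]
          exact mul_le_of_le_one_right (by positivity) hu |>.trans (by gcongr)
      _ ≤ ‖g (γ s)‖ := hg' _ (hγ_mem s hs)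
  have hG := norm_le_gronwallBound_of_norm_deriv_right_le (f := g ∘ γ) (δ := ‖g 0‖) (K := 1)
    (ε := 0) (fun s hs => (hderiv s hs.1).continuousAt.continuousWithinAt)
    (fun s hs => (hderiv s hs.1).hasDerivWithinAt)
    (by simp [γ]) (fun s hs => by simpa using hbound s hs.1) S ⟨hS, le_rfl⟩
  rwa [gronwallBound_ε0, sub_zero, one_mul] at hG

theorem norm_le_mul_exp_of_norm_deriv_mul_sq_le {g : ℂ → ℂ}
    (hgd : DifferentiableOn ℂ g (ball 0 1))
    (hg' : ∀ w ∈ ball (0 : ℂ) 1, ‖deriv g w‖ * (1 - ‖w‖) ^ 2 ≤ ‖g w‖) {z : ℂ} (hz : ‖z‖ < 1) :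
    ‖g z‖ ≤ ‖g 0‖ * Real.exp (‖z‖ / (1 - ‖z‖)) := by
  have hr : 0 < 1 - ‖z‖ := by linarith
  have hu : ‖z / ‖z‖‖ ≤ 1 := by
    rw [norm_div, Complex.norm_real, norm_norm]; exact div_self_le_one _
  have hz_eq : (((‖z‖ / (1 - ‖z‖)) / (1 + ‖z‖ / (1 - ‖z‖)) : ℝ) : ℂ) * (z / ‖z‖) = z := by
    have : (‖z‖ / (1 - ‖z‖)) / (1 + ‖z‖ / (1 - ‖z‖)) = ‖z‖ := by field_simp; ring
    rw [this]
    rcases eq_or_ne z 0 with rfl | hz0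
    · simp
    · exact mul_div_cancel₀ _ (by simpa using hz0)
  have hradial := norm_radial_le_mul_exp hgd hg' hu (div_nonneg (norm_nonneg z) hr.le)
  rwa [hz_eq] at hradial

theorem stmt_10_general (μ g h : ℂ → ℂ)
    (hμd : DifferentiableOn ℂ μ (ball (0 : ℂ) 1))
    (hμ0 : μ 0 = 0)
    (hμlt : ∀ z ∈ ball (0 : ℂ) 1, ‖μ z‖ < 1)
    (hgd : DifferentiableOn ℂ g (ball (0 : ℂ) 1))
    (hg0 : g 0 = 1)
    (heq : ∀ z ∈ ball (0 : ℂ) 1, z * deriv g z * (1 - μ z) * (1 - z) = μ z * g z)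
    (hh : ∀ z, h z = g z / (1 - z)) :
    ∀ z ∈ ball (0 : ℂ) 1,
      ‖z‖ * ‖h z‖ * ‖deriv g z‖ ≤
        (‖z‖ / (1 - ‖z‖) ^ 3) *
          Real.exp (2 * ‖z‖ / (1 - ‖z‖)) := by
  have hμ_le : ∀ w ∈ ball (0 : ℂ) 1, ‖μ w‖ ≤ ‖w‖ := fun w hw =>
    norm_le_norm_of_mapsTo_ball hμd (fun v hv => mem_closedBall_zero_iff.2 (hμlt v hv).le) hμ0
      (mem_ball_zero_iff.1 hw)
  have hg' := norm_deriv_mul_sq_le_of_ode hgd hμ_le heq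
  intro z hz
  have hr : ‖z‖ < 1 := mem_ball_zero_iff.1 hz
  have hr' : 0 < 1 - ‖z‖ := by linarith
  have hgz : ‖g z‖ ≤ Real.exp (‖z‖ / (1 - ‖z‖)) := by
    simpa [hg0] using norm_le_mul_exp_of_norm_deriv_mul_sq_le hgd hg' hr
  have hhz : ‖h z‖ * (1 - ‖z‖) ≤ ‖g z‖ := by
    have h1z : 1 - ‖z‖ ≤ ‖1 - z‖ := by simpa using norm_sub_norm_le (1 : ℂ) z
    rw [hh, norm_div]
    calc ‖g z‖ / ‖1 - z‖ * (1 - ‖z‖) ≤ ‖g z‖ / ‖1 - z‖ * ‖1 - z‖ := by gcongr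
      _ = ‖g z‖ := div_mul_cancel₀ _ (by linarith)
  calc ‖z‖ * ‖h z‖ * ‖deriv g z‖
      = ‖z‖ * (‖h z‖ * (1 - ‖z‖)) * (‖deriv g z‖ * (1 - ‖z‖) ^ 2) / (1 - ‖z‖) ^ 3 := by
        field_simp
    _ ≤ ‖z‖ * ‖g z‖ * ‖g z‖ / (1 - ‖z‖) ^ 3 := by gcongr; exact hg' z hz
    _ ≤ ‖z‖ * Real.exp (‖z‖ / (1 - ‖z‖)) * Real.exp (‖z‖ / (1 - ‖z‖)) / (1 - ‖z‖) ^ 3 := by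
        gcongr
    _ = (‖z‖ / (1 - ‖z‖) ^ 3) * Real.exp (2 * ‖z‖ / (1 - ‖z‖)) := by
        rw [mul_assoc, ← Real.exp_add]; ring_nf

theorem stmt_10 (μ g h : ℂ → ℂ)
    (hμd : DifferentiableOn ℂ μ (ball (0 : ℂ) 1))
    (hμ0 : μ 0 = 0)
    (hμlt : ∀ z ∈ ball (0 : ℂ) 1, ‖μ z‖ < 1)
    (hgd : DifferentiableOn ℂ g (ball (0 : ℂ) 1))
    (hgne : ∀ z ∈ ball (0 : ℂ) 1, g z ≠ 0)
    (hg0 : g 0 = 1)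
    (heq : ∀ z ∈ ball (0 : ℂ) 1, z * deriv g z * (1 - μ z) * (1 - z) = μ z * g z)
    (hh : ∀ z, h z = g z / (1 - z)) :
    ∀ z ∈ ball (0 : ℂ) 1,
      ‖z‖ * ‖h z‖ * ‖deriv g z‖ ≤
        (‖z‖ / (1 - ‖z‖) ^ 3) *
          Real.exp (2 * ‖z‖ / (1 - ‖z‖)) :=
  stmt_10_general μ g h hμd hμ0 hμlt hgd hg0 heq hh
end

section
/- Let μ be analytic on the open unit disk 𝔻 with μ(0) = 0 and |μ(z)| < 1 for all z ∈ 𝔻. Let g be analytic and nonvanishing on 𝔻 with g(0) = 1, satisfying z·g′(z)·(1 − μ(z))·(1 − z) = μ(z)·g(z) for all z ∈ 𝔻, and define h(z) = g(z)/(1 − z). Then for all z ∈ 𝔻, |z·(h(z) + z·h′(z))·conj(g(z)) − z̄·z·h(z)·conj(g′(z))| ≤ (|z|·(1 + |z|)/(1 − |z|)³)·exp(2|z|/(1 − |z|)). (The left-hand side equals |Df(z)| = |z·f_z(z) − z̄·f_z̄(z)| for the log-harmonic mapping f(z) = z·h(z)·conj(g(z)).) -/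
/-!
By Schwarz's lemma `‖μ w‖ ≤ ‖w‖`, so the differential equation for `g` gives
`‖w g'(w)‖ (1 - ‖w‖)² ≤ ‖w‖ ‖g w‖`. Along the radius `t ↦ t z` this says that
`log ‖g (t z)‖` grows at most like `1 / (1 - t ‖z‖)`, whence `‖g z‖ ≤ exp (‖z‖ / (1 - ‖z‖))`.
Finally `Df = z / (1 - z) · (|g|² / (1 - z) + (c - c̄))` with `c = z g' ḡ`, and the two bounds
combine to the estimate.
-/

open Complex ComplexConjugate Metric Set

theorem norm_mul_mul_one_sub_norm_sq_le {w m a b : ℂ} (hw : ‖w‖ ≤ 1) (hm : ‖m‖ ≤ ‖w‖)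
    (h : w * b * (1 - m) * (1 - w) = m * a) : ‖w * b‖ * (1 - ‖w‖) ^ 2 ≤ ‖w‖ * ‖a‖ := by
  have hm' : 1 - ‖m‖ ≤ ‖1 - m‖ := by simpa using norm_sub_norm_le 1 m
  have hw' : 1 - ‖w‖ ≤ ‖1 - w‖ := by simpa using norm_sub_norm_le 1 w
  calc ‖w * b‖ * (1 - ‖w‖) ^ 2 = ‖w * b‖ * ((1 - ‖w‖) * (1 - ‖w‖)) := by ring
    _ ≤ ‖w * b‖ * (‖1 - m‖ * ‖1 - w‖) := by gcongr; linarith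
    _ = ‖m‖ * ‖a‖ := by rw [← norm_mul, ← norm_mul, ← norm_mul, ← mul_assoc, h]
    _ ≤ ‖w‖ * ‖a‖ := by gcongr

theorem norm_le_norm_mul_exp_of_norm_deriv_le {E : Type*} [NormedAddCommGroup E]
    [InnerProductSpace ℝ E] {f f' : ℝ → E} {β β' : ℝ → ℝ} {a b : ℝ} (hab : a ≤ b)
    (hf : ∀ t ∈ Icc a b, HasDerivAt f (f' t) t) (hne : ∀ t ∈ Icc a b, f t ≠ 0)
    (hβ : ∀ t ∈ Icc a b, HasDerivAt β (β' t) t)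
    (hbound : ∀ t ∈ Ioo a b, ‖f' t‖ ≤ β' t * ‖f t‖) :
    ‖f b‖ ≤ ‖f a‖ * Real.exp (β b - β a) := by
  have hφ : ∀ t ∈ Icc a b, HasDerivAt (fun t ↦ 2 * β t - Real.log (‖f t‖ ^ 2))
      (2 * β' t - 2 * inner ℝ (f t) (f' t) / ‖f t‖ ^ 2) t := fun t ht ↦
    ((hβ t ht).const_mul 2).sub ((hf t ht).norm_sq.log (by simpa using hne t ht))
  have hmono : MonotoneOn (fun t ↦ 2 * β t - Real.log (‖f t‖ ^ 2)) (Icc a b) := by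
    refine monotoneOn_of_hasDerivWithinAt_nonneg (convex_Icc a b)
      (fun t ht ↦ (hφ t ht).continuousAt.continuousWithinAt)
      (fun t ht ↦ (hφ t (interior_subset ht)).hasDerivWithinAt) fun t ht ↦ ?_
    rw [interior_Icc] at ht
    have hft : 0 < ‖f t‖ := norm_pos_iff.2 (hne t (Ioo_subset_Icc_self ht))
    have hinner : inner ℝ (f t) (f' t) ≤ β' t * ‖f t‖ ^ 2 := calc
      inner ℝ (f t) (f' t) ≤ ‖f t‖ * ‖f' t‖ := real_inner_le_norm _ _
      _ ≤ ‖f t‖ * (β' t * ‖f t‖) := by gcongr; exact hbound t ht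
      _ = β' t * ‖f t‖ ^ 2 := by ring
    rw [sub_nonneg, mul_div_assoc]
    gcongr
    rwa [div_le_iff₀ (by positivity)]
  have hlog := hmono (left_mem_Icc.2 hab) (right_mem_Icc.2 hab) hab
  simp only [Real.log_pow] at hlog
  have hfa : 0 < ‖f a‖ := norm_pos_iff.2 (hne a (left_mem_Icc.2 hab))
  have hfb : 0 < ‖f b‖ := norm_pos_iff.2 (hne b (right_mem_Icc.2 hab))
  calc ‖f b‖ = Real.exp (Real.log ‖f b‖) := (Real.exp_log hfb).symm
    _ ≤ Real.exp (Real.log ‖f a‖ + (β b - β a)) := by gcongr; push_cast at hlog; linarith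
    _ = ‖f a‖ * Real.exp (β b - β a) := by rw [Real.exp_add, Real.exp_log hfa]

theorem norm_le_norm_mul_exp_of_norm_mul_deriv_le {g : ℂ → ℂ}
    (hgd : DifferentiableOn ℂ g (ball 0 1)) (hgne : ∀ w ∈ ball (0 : ℂ) 1, g w ≠ 0)
    (hbound : ∀ w ∈ ball (0 : ℂ) 1, ‖w * deriv g w‖ * (1 - ‖w‖) ^ 2 ≤ ‖w‖ * ‖g w‖)
    {z : ℂ} (hz : z ∈ ball 0 1) :
    ‖g z‖ ≤ ‖g 0‖ * Real.exp (‖z‖ / (1 - ‖z‖)) := by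
  set r := ‖z‖
  have hr : r < 1 := mem_ball_zero_iff.1 hz
  have hseg : ∀ t ∈ Icc (0 : ℝ) 1, ‖(t : ℂ) * z‖ = t * r := fun t ht ↦ by
    rw [norm_mul, norm_real, Real.norm_of_nonneg ht.1]
  have htr : ∀ t ∈ Icc (0 : ℝ) 1, t * r < 1 := fun t ht ↦
    (mul_le_of_le_one_left (norm_nonneg z) ht.2).trans_lt hr
  have hmem : ∀ t ∈ Icc (0 : ℝ) 1, (t : ℂ) * z ∈ ball (0 : ℂ) 1 := fun t ht ↦ by
    rw [mem_ball_zero_iff, hseg t ht]; exact htr t ht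
  have key := norm_le_norm_mul_exp_of_norm_deriv_le (f := fun t : ℝ ↦ g (t * z))
    (f' := fun t ↦ deriv g (t * z) * z) (β := fun t ↦ (1 - t * r)⁻¹)
    (β' := fun t ↦ r / (1 - t * r) ^ 2) zero_le_one
    (fun t ht ↦ by
      have hg := (hgd.differentiableAt (isOpen_ball.mem_nhds (hmem t ht))).hasDerivAt
      simpa using (hg.comp (t : ℂ) ((hasDerivAt_id _).mul_const z)).comp_ofReal)
    (fun t ht ↦ hgne _ (hmem t ht))
    (fun t ht ↦ by
      have hne : 1 - t * r ≠ 0 := (sub_pos.2 (htr t ht)).ne'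
      refine ((((hasDerivAt_id' t).mul_const r).const_sub 1).fun_inv hne).congr_deriv ?_
      ring)
    (fun t ht ↦ by
      have ht' := Ioo_subset_Icc_self ht
      have h := hbound _ (hmem t ht')
      rw [hseg t ht', norm_mul, hseg t ht'] at h
      have h' : ‖deriv g (t * z) * z‖ * (1 - t * r) ^ 2 ≤ r * ‖g (t * z)‖ := by
        refine le_of_mul_le_mul_left ?_ ht.1
        rw [norm_mul, show ‖z‖ = r from rfl]
        linear_combination h
      rwa [div_mul_eq_mul_div, le_div_iff₀ (pow_pos (sub_pos.2 (htr t ht')) 2)])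
  simp only [ofReal_one, one_mul, ofReal_zero, zero_mul, sub_zero, inv_one] at key
  convert key using 3
  field_simp [(sub_pos.2 hr).ne']
  ring

/-- `Df(z)` for `f = z h ḡ` with `g z = a`, `g' z = b`, `h = g / (1 - ·)`. -/
theorem norm_logHarmonicD_le {z a b : ℂ} (hz : ‖z‖ < 1)
    (hb : ‖z * b‖ * (1 - ‖z‖) ^ 2 ≤ ‖z‖ * ‖a‖) :
    ‖z * (a / (1 - z) + z * ((b * (1 - z) + a) / (1 - z) ^ 2)) * conj a
        - conj z * z * (a / (1 - z)) * conj b‖ ≤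
      ‖z‖ * (1 + ‖z‖) / (1 - ‖z‖) ^ 3 * ‖a‖ ^ 2 := by
  set r := ‖z‖
  have hr : 0 < 1 - r := sub_pos.2 hz
  have h1z : 1 - r ≤ ‖1 - z‖ := by simpa using norm_sub_norm_le 1 z
  have h1z' : 1 - z ≠ 0 := norm_pos_iff.1 (hr.trans_le h1z)
  set c := z * b * conj a
  have hfactor : z * (a / (1 - z) + z * ((b * (1 - z) + a) / (1 - z) ^ 2)) * conj a
      - conj z * z * (a / (1 - z)) * conj b =
        z / (1 - z) * (a * conj a / (1 - z) + (c - conj c)) := by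
    simp only [c, map_mul, conj_conj]
    field_simp
    ring
  have hc : ‖c‖ ≤ r * ‖a‖ ^ 2 / (1 - r) ^ 2 := by
    rw [norm_mul, norm_conj, le_div_iff₀ (by positivity)]
    nlinarith [norm_nonneg a]
  have hcc : ‖c - conj c‖ ≤ 2 * (r * ‖a‖ ^ 2 / (1 - r) ^ 2) := by
    linarith [norm_sub_le c (conj c), norm_conj c]
  rw [hfactor]
  calc ‖z / (1 - z) * (a * conj a / (1 - z) + (c - conj c))‖
      ≤ r / (1 - r) * (‖a‖ ^ 2 / (1 - r) + 2 * (r * ‖a‖ ^ 2 / (1 - r) ^ 2)) := by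
        rw [norm_mul, norm_div]
        gcongr
        refine (norm_add_le _ _).trans (add_le_add ?_ hcc)
        rw [norm_div, norm_mul, norm_conj, ← sq]
        gcongr
    _ = r * (1 + r) / (1 - r) ^ 3 * ‖a‖ ^ 2 := by field_simp; ring

theorem stmt_11 (μ g h : ℂ → ℂ)
    (hμd : DifferentiableOn ℂ μ (ball (0 : ℂ) 1))
    (hμ0 : μ 0 = 0)
    (hμlt : ∀ z ∈ ball (0 : ℂ) 1, ‖μ z‖ < 1)
    (hgd : DifferentiableOn ℂ g (ball (0 : ℂ) 1))
    (hgne : ∀ z ∈ ball (0 : ℂ) 1, g z ≠ 0)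
    (hg0 : g 0 = 1)
    (heq : ∀ z ∈ ball (0 : ℂ) 1, z * deriv g z * (1 - μ z) * (1 - z) = μ z * g z)
    (hh : ∀ z, h z = g z / (1 - z)) :
    ∀ z ∈ ball (0 : ℂ) 1,
      ‖z * (h z + z * deriv h z) * (starRingEnd ℂ) (g z)
          - (starRingEnd ℂ) z * z * h z * (starRingEnd ℂ) (deriv g z)‖ ≤
        (‖z‖ * (1 + ‖z‖) / (1 - ‖z‖) ^ 3) *
          Real.exp (2 * ‖z‖ / (1 - ‖z‖)) := by
  have hschwarz : ∀ w ∈ ball (0 : ℂ) 1, ‖μ w‖ ≤ ‖w‖ := fun w hw ↦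
    norm_le_norm_of_mapsTo_ball hμd (fun v hv ↦ mem_closedBall_zero_iff.2 (hμlt v hv).le) hμ0
      (mem_ball_zero_iff.1 hw)
  have hlogDeriv : ∀ w ∈ ball (0 : ℂ) 1, ‖w * deriv g w‖ * (1 - ‖w‖) ^ 2 ≤ ‖w‖ * ‖g w‖ :=
    fun w hw ↦
      norm_mul_mul_one_sub_norm_sq_le (mem_ball_zero_iff.1 hw).le (hschwarz w hw) (heq w hw)
  intro z hz
  have hgrowth : ‖g z‖ ≤ Real.exp (‖z‖ / (1 - ‖z‖)) := by
    simpa [hg0] using norm_le_norm_mul_exp_of_norm_mul_deriv_le hgd hgne hlogDeriv hz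
  have hz1 : 1 - z ≠ 0 := sub_ne_zero.2 fun h1 ↦ by simp [← h1] at hz
  have hderiv_h : deriv h z = (deriv g z * (1 - z) + g z) / (1 - z) ^ 2 := by
    have hg := (hgd.differentiableAt (isOpen_ball.mem_nhds hz)).hasDerivAt
    rw [funext hh, (hg.fun_div ((hasDerivAt_id' z).const_sub 1) hz1).deriv]
    ring
  rw [hh z, hderiv_h]
  have hr : 0 < 1 - ‖z‖ := sub_pos.2 (mem_ball_zero_iff.1 hz)
  refine (norm_logHarmonicD_le (mem_ball_zero_iff.1 hz) (hlogDeriv z hz)).trans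
    (mul_le_mul_of_nonneg_left ?_ (div_nonneg (by positivity) (pow_nonneg hr.le 3)))
  calc ‖g z‖ ^ 2 ≤ Real.exp (‖z‖ / (1 - ‖z‖)) ^ 2 := by gcongr
    _ = Real.exp (2 * ‖z‖ / (1 - ‖z‖)) := by rw [← Real.exp_nat_mul]; ring_nf
end

section
/- Define f_{1/2} on the open unit disk 𝔻 by f_{1/2}(z) = (z/(1 − z))·exp(Re(2z/(1 − z))). Then f_{1/2} is injective on 𝔻 and the image f_{1/2}(𝔻) equals the half-plane {w ∈ ℂ : Re w > −1/(2e)}. -/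
/-!
Write `f_{1/2} = Φ ∘ C` with `C z = z / (1 - z)` and `Φ w = w · exp (2 Re w)`. The Möbius map `C`
is a bijection of the disk onto the half-plane `Re w > -1/2`, with inverse `w ↦ w / (1 + w)`.
The map `Φ` acts on real parts by `ψ u = u e^{2u}`, which is strictly increasing on `[-1/2, ∞)`
(as `ψ' u = (1 + 2u) e^{2u}`) and runs from `ψ (-1/2) = -1/(2e)` to `∞`, and on imaginary parts
by multiplication with the positive factor `e^{2u}`; so `Φ` is a bijection of `Re w > -1/2`
onto `Re w > -1/(2e)`.
-/

open Complex Metric Set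

lemma strictMonoOn_mul_exp_two_mul :
    StrictMonoOn (fun u : ℝ => u * Real.exp (2 * u)) (Ici (-(1 / 2))) := by
  apply strictMonoOn_of_deriv_pos (convex_Ici _) (by fun_prop)
  intro u hu
  rw [interior_Ici, mem_Ioi] at hu
  have hexp : HasDerivAt (fun u : ℝ => Real.exp (2 * u)) (Real.exp (2 * u) * 2) u := by
    simpa using ((hasDerivAt_id u).const_mul 2).exp
  have hderiv : HasDerivAt (fun u : ℝ => u * Real.exp (2 * u))
      (1 * Real.exp (2 * u) + u * (Real.exp (2 * u) * 2)) u := (hasDerivAt_id' u).mul hexp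
  rw [hderiv.deriv]
  nlinarith [Real.exp_pos (2 * u)]

lemma neg_half_mul_exp_two_mul_neg_half : -(1 / 2) * Real.exp (2 * -(1 / 2)) = -(1 / (2 * Real.exp 1)) := by
  rw [show (2 : ℝ) * -(1 / 2) = -1 by ring, Real.exp_neg]
  field_simp

lemma bijOn_mul_exp_two_mul :
    BijOn (fun u : ℝ => u * Real.exp (2 * u)) (Ioi (-(1 / 2))) (Ioi (-(1 / (2 * Real.exp 1)))) := by
  have hmono := strictMonoOn_mul_exp_two_mul
  refine ⟨fun u hu => ?_, hmono.injOn.mono Ioi_subset_Ici_self, fun a ha => ?_⟩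
  · rw [mem_Ioi, ← neg_half_mul_exp_two_mul_neg_half]
    exact hmono self_mem_Ici (mem_Ici.2 (le_of_lt hu)) hu
  · rw [mem_Ioi] at ha
    set M := max 1 a
    have hM : a ≤ M * Real.exp (2 * M) := by
      have hexp : 1 ≤ Real.exp (2 * M) := Real.one_le_exp (by positivity)
      nlinarith [le_max_left 1 a, le_max_right 1 a]
    have hmem : a ∈ Icc (-(1 / 2) * Real.exp (2 * -(1 / 2))) (M * Real.exp (2 * M)) := by
      rw [neg_half_mul_exp_two_mul_neg_half]
      exact ⟨le_of_lt ha, hM⟩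
    obtain ⟨u, hu, rfl⟩ := intermediate_value_Icc (by linarith [le_max_left 1 a])
      (by fun_prop : Continuous fun u : ℝ => u * Real.exp (2 * u)).continuousOn hmem
    refine ⟨u, lt_of_le_of_ne hu.1 ?_, rfl⟩
    rintro rfl
    exact lt_irrefl _ (neg_half_mul_exp_two_mul_neg_half ▸ ha)

lemma bijOn_mul_exp_two_mul_re :
    BijOn (fun w : ℂ => w * ((Real.exp (2 * w.re) : ℝ) : ℂ)) {w | -(1 / 2 : ℝ) < w.re}
      {w | -(1 / (2 * Real.exp 1)) < w.re} := by
  have hψ := bijOn_mul_exp_two_mul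
  have hre (w : ℂ) : (w * ((Real.exp (2 * w.re) : ℝ) : ℂ)).re = w.re * Real.exp (2 * w.re) := by
    simp only [mul_re, ofReal_re, ofReal_im, mul_zero, sub_zero]
  have him (w : ℂ) : (w * ((Real.exp (2 * w.re) : ℝ) : ℂ)).im = w.im * Real.exp (2 * w.re) := by
    simp only [mul_im, ofReal_re, ofReal_im, mul_zero, zero_add]
  refine ⟨fun w hw => ?_, fun w₁ hw₁ w₂ hw₂ heq => ?_, fun w hw => ?_⟩
  · show -(1 / (2 * Real.exp 1)) < _
    rw [hre]
    exact hψ.mapsTo hw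
  · have hre_eq : w₁.re = w₂.re :=
      hψ.injOn (mem_Ioi.2 hw₁) (mem_Ioi.2 hw₂) (by simpa only [hre] using congrArg re heq)
    have him_eq := congrArg im heq
    rw [him, him, hre_eq] at him_eq
    exact Complex.ext hre_eq (mul_right_cancel₀ (Real.exp_pos _).ne' him_eq)
  · obtain ⟨u, hu, hψu⟩ := hψ.surjOn (mem_Ioi.2 hw)
    have hexp : Real.exp (2 * u) ≠ 0 := (Real.exp_pos _).ne'
    refine ⟨⟨u, w.im / Real.exp (2 * u)⟩, hu, Complex.ext ?_ ?_⟩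
    · rw [hre]; exact hψu
    · rw [him]; field_simp

lemma one_sub_ne_zero_of_norm_lt_one {z : ℂ} (hz : ‖z‖ < 1) : 1 - z ≠ 0 :=
  sub_ne_zero.2 fun h => by simp [← h] at hz

lemma re_div_one_sub_gt_neg_half {z : ℂ} (hz : ‖z‖ < 1) : -(1 / 2 : ℝ) < (z / (1 - z)).re := by
  have hD : 0 < normSq (1 - z) := normSq_pos.2 (one_sub_ne_zero_of_norm_lt_one hz)
  have hnorm : z.re ^ 2 + z.im ^ 2 < 1 := by
    have : ‖z‖ ^ 2 = z.re ^ 2 + z.im ^ 2 := by rw [Complex.sq_norm, normSq_apply]; ring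
    nlinarith [norm_nonneg z]
  rw [div_re, ← add_div, lt_div_iff₀ hD, normSq_apply]
  simp only [sub_re, sub_im, one_re, one_im]
  nlinarith

lemma one_add_ne_zero_of_neg_half_lt_re {w : ℂ} (hw : -(1 / 2 : ℝ) < w.re) : 1 + w ≠ 0 := by
  intro h
  have := congrArg re h
  simp only [add_re, one_re, zero_re] at this
  linarith

lemma norm_div_one_add_lt_one {w : ℂ} (hw : -(1 / 2 : ℝ) < w.re) : ‖w / (1 + w)‖ < 1 := by
  have hw1 := one_add_ne_zero_of_neg_half_lt_re hw
  rw [norm_div, div_lt_one (norm_pos_iff.2 hw1)]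
  have : normSq w < normSq (1 + w) := by
    rw [normSq_apply, normSq_apply]
    simp only [add_re, add_im, one_re, one_im]
    nlinarith
  rwa [← sq_lt_sq₀ (norm_nonneg _) (norm_nonneg _), Complex.sq_norm, Complex.sq_norm]

lemma bijOn_div_one_sub_ball :
    BijOn (fun z : ℂ => z / (1 - z)) (ball 0 1) {w | -(1 / 2 : ℝ) < w.re} := by
  refine InvOn.bijOn (f' := fun w => w / (1 + w)) ⟨fun z hz => ?_, fun w hw => ?_⟩
    (fun z hz => re_div_one_sub_gt_neg_half (mem_ball_zero_iff.1 hz))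
    (fun w hw => mem_ball_zero_iff.2 (norm_div_one_add_lt_one hw))
  · have hz1 := one_sub_ne_zero_of_norm_lt_one (mem_ball_zero_iff.1 hz)
    simp only
    field_simp
    ring
  · have hw1 := one_add_ne_zero_of_neg_half_lt_re hw
    simp only
    field_simp
    ring

theorem stmt_15 (f : ℂ → ℂ)
    (hf : ∀ z : ℂ, z ≠ 1 →
        f z = z / (1 - z) * ((Real.exp ((2 * z / (1 - z)).re) : ℝ) : ℂ)) :
    Set.InjOn f (ball (0 : ℂ) 1) ∧
      f '' ball (0 : ℂ) 1 = {w : ℂ | -(1 / (2 * Real.exp 1)) < w.re} := by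
  have hcomp : EqOn ((fun w : ℂ => w * ((Real.exp (2 * w.re) : ℝ) : ℂ)) ∘ fun z => z / (1 - z)) f
      (ball 0 1) := by
    intro z hz
    rw [hf z fun h => by simp [h] at hz, Function.comp_apply, mul_div_assoc]
    simp
  have hbij := (bijOn_mul_exp_two_mul_re.comp bijOn_div_one_sub_ball).congr hcomp
  exact ⟨hbij.injOn, hbij.image_eq⟩
end
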